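/- arXiv:2412.20874 — 4 statements merged into one kernel-verified Lean document; each statement's English description precedes it below -/
import Mathlib

section
/- For every Z2×Z2-flow f on a graph G, there exists a Z2×Z2-flow g on G with supp(g) = supp(f) such that the edge set E_{g=(0,1)}(G) contains no circuit of G and the edge set E_{g=(1,0)}(G) contains no circuit of G. -/
/-- A finite multigraph: loops and multiple edges are allowed.  Each edge is
assigned its (unordered) pair of endpoints. -/
structure Multigraph where
  V : Type
  E : Type
  finV : Finite V
  finE : Finite E
  ends : E → Sym2 V

attribute [instance] Multigraph.finV Multigraph.finE

namespace Multigraph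

/-- A walk of length `n`: a sequence of `n+1` vertices and `n` edges, each edge
joining consecutive vertices. -/
structure Walk (G : Multigraph) (n : ℕ) where
  vtx : Fin (n + 1) → G.V
  edge : Fin n → G.E
  compat : ∀ i : Fin n, G.ends (edge i) = s(vtx i.castSucc, vtx i.succ)

variable (G : Multigraph)

/-- The degree of a vertex (a loop counts twice). -/
noncomputable def degree (v : G.V) : ℕ :=
  Nat.card {e : G.E // v ∈ G.ends e ∧ ¬ (G.ends e).IsDiag} +
    2 * Nat.card {e : G.E // G.ends e = s(v, v)}

/-- The degree of a vertex in the subgraph with edge set `S` (a loop counts twice). -/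
noncomputable def degIn (S : Set G.E) (v : G.V) : ℕ :=
  Nat.card {e : G.E // e ∈ S ∧ v ∈ G.ends e ∧ ¬ (G.ends e).IsDiag} +
    2 * Nat.card {e : G.E // e ∈ S ∧ G.ends e = s(v, v)}

/-- A cycle (identified with its edge set): every vertex has even degree. -/
def IsCycle (S : Set G.E) : Prop := ∀ v : G.V, Even (G.degIn S v)

/-- `u` is joined to `w` by a path using only edges in `S`. -/
def Reaches (S : Set G.E) (u w : G.V) : Prop :=
  Relation.ReflTransGen (fun a b => ∃ e ∈ S, G.ends e = s(a, b)) u w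

/-- A circuit (identified with its edge set): a connected `2`-regular subgraph. -/
def IsCircuit (S : Set G.E) : Prop :=
  S.Nonempty ∧
    (∀ v : G.V, (∃ e ∈ S, v ∈ G.ends e) → G.degIn S v = 2) ∧
    ∀ u w : G.V, (∃ e ∈ S, u ∈ G.ends e) → (∃ e ∈ S, w ∈ G.ends e) → G.Reaches S u w

/-- A `ℤ₂×ℤ₂`-flow: at every vertex the values on the incident edges sum to zero
(a loop contributes its value twice, hence zero). -/
def IsFlow (f : G.E → ZMod 2 × ZMod 2) : Prop :=
  ∀ v : G.V, ∑ᶠ e ∈ {e : G.E | v ∈ G.ends e ∧ ¬ (G.ends e).IsDiag}, f e = 0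

/-- The support of a flow. -/
def supp (f : G.E → ZMod 2 × ZMod 2) : Set G.E := {e | f e ≠ 0}

/-- Contraction of the edge set `C`: delete the edges of `C` and identify the
ends of each edge of `C`. -/
def contract (C : Set G.E) : Multigraph where
  V := Quot fun u w : G.V => ∃ e ∈ C, G.ends e = s(u, w)
  E := {e : G.E // e ∉ C}
  finV := Finite.of_surjective _ (Quot.mk_surjective)
  finE := inferInstance
  ends := fun e => (G.ends e.1).map (Quot.mk _)

/-- A path: all vertices distinct (hence all edges distinct, which we also require). -/
def Walk.IsPath {n : ℕ} (W : G.Walk n) : Prop :=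
  Function.Injective W.vtx ∧ Function.Injective W.edge

/-- A nontrivial path all of whose internal vertices have degree `2` in `G`. -/
def IsDeg2Path {n : ℕ} (W : G.Walk n) : Prop :=
  1 ≤ n ∧ W.IsPath G ∧ ∀ i : Fin (n + 1), 0 < i.val → i.val < n → G.degree (W.vtx i) = 2

/-- A thread of `G`: a maximal path all of whose internal vertices have degree `2`
in `G` (maximal: its edge set is not properly contained in the edge set of
another such path). -/
def IsThread {n : ℕ} (W : G.Walk n) : Prop :=
  G.IsDeg2Path W ∧ ∀ (m : ℕ) (Q : G.Walk m), G.IsDeg2Path Q →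
    Set.range W.edge ⊆ Set.range Q.edge → Set.range Q.edge = Set.range W.edge

/-- A cycle cover: a (multi)collection of cycles covering every edge. -/
def IsCycleCover (𝒞 : Multiset (Set G.E)) : Prop :=
  (∀ S ∈ 𝒞, G.IsCycle S) ∧ ∀ e : G.E, ∃ S ∈ 𝒞, e ∈ S

/-- The length of a cycle cover: the sum of the lengths of its cycles. -/
noncomputable def coverLength (𝒞 : Multiset (Set G.E)) : ℕ :=
  (𝒞.map Set.ncard).sum

/-- The minimum length of a cycle cover of `G`. -/
noncomputable def cc : ℕ :=
  sInf {L : ℕ | ∃ 𝒞 : Multiset (Set G.E), G.IsCycleCover 𝒞 ∧ G.coverLength 𝒞 = L}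

/-- `G` is bridgeless: the ends of each edge `e` are still joined after deleting `e`. -/
def Bridgeless : Prop :=
  ∀ (e : G.E) (u w : G.V), G.ends e = s(u, w) → G.Reaches {e}ᶜ u w

/-- The connected component of the subgraph with edge set `S` containing the edge `e₀`. -/
def component (S : Set G.E) (e₀ : G.E) : Set G.E :=
  {e ∈ S | ∃ u w : G.V, u ∈ G.ends e₀ ∧ w ∈ G.ends e ∧ G.Reaches S u w}

/-- `B` is a connected component of the subgraph with edge set `S`. -/
def IsComponent (S B : Set G.E) : Prop := ∃ e₀ ∈ S, B = G.component S e₀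

/-- A `k`-flow: an orientation `D` (given by the tail/head pair of each edge)
together with an integer-valued function `f` with `|f e| < k`, conserved at
every vertex. -/
def IsIntFlow (k : ℕ) (D : G.E → G.V × G.V) (f : G.E → ℤ) : Prop :=
  (∀ e : G.E, s((D e).1, (D e).2) = G.ends e) ∧
    (∀ e : G.E, |f e| < (k : ℤ)) ∧
    ∀ v : G.V, (∑ᶠ e ∈ {e : G.E | (D e).1 = v}, f e) =
      ∑ᶠ e ∈ {e : G.E | (D e).2 = v}, f e

end Multigraph

/-! Among all flows with the support of `f`, take one with the fewest edges valued `(0, 1)` or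
`(1, 0)`. If such a flow `g` had a circuit `S` inside `E_{g=c}` with `c` one of these two values,
adding `c + (1, 1)` on `S` (still a flow, since `S` is a cycle and `Z₂ × Z₂` has exponent `2`) would
revalue `S` to `(1, 1)` without changing the support, contradicting minimality. -/

theorem finsum_mem_indicator_const {α M : Type*} [AddCommMonoid M] {T : Set α} (hT : T.Finite)
    (S : Set α) (a : M) : ∑ᶠ e ∈ T, S.indicator (fun _ => a) e = (T ∩ S).ncard • a := by
  rw [← finsum_mem_inter_add_sdiff S hT,
    finsum_mem_congr rfl fun e he => Set.indicator_of_mem he.2 _,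
    finsum_mem_congr rfl fun e he => Set.indicator_of_notMem he.2 _, finsum_mem_zero, add_zero,
    finsum_mem_eq_finite_toFinset_sum _ (hT.inter_of_left S), Finset.sum_const,
    Set.ncard_eq_toFinset_card _ (hT.inter_of_left S)]

namespace Multigraph

variable {G : Multigraph}

theorem IsCircuit.isCycle {S : Set G.E} (hS : G.IsCircuit S) : G.IsCycle S := by
  intro v
  by_cases hv : ∃ e ∈ S, v ∈ G.ends e
  · rw [hS.2.1 v hv]
    exact even_two
  · have hnonloop : IsEmpty {e : G.E // e ∈ S ∧ v ∈ G.ends e ∧ ¬ (G.ends e).IsDiag} :=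
      ⟨fun e => hv ⟨e.1, e.2.1, e.2.2.1⟩⟩
    have hloop : IsEmpty {e : G.E // e ∈ S ∧ G.ends e = s(v, v)} :=
      ⟨fun e => hv ⟨e.1, e.2.1, by simp [e.2.2]⟩⟩
    simp [degIn, Nat.card_of_isEmpty]

theorem IsCycle.even_ncard_nonloop_inter {S : Set G.E} (hS : G.IsCycle S) (v : G.V) :
    Even ({e : G.E | v ∈ G.ends e ∧ ¬ (G.ends e).IsDiag} ∩ S).ncard := by
  have hcard : ({e : G.E | v ∈ G.ends e ∧ ¬ (G.ends e).IsDiag} ∩ S).ncard =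
      Nat.card {e : G.E // e ∈ S ∧ v ∈ G.ends e ∧ ¬ (G.ends e).IsDiag} := by
    rw [← Nat.card_coe_set_eq]
    exact Nat.card_congr (Equiv.subtypeEquivRight fun e => by simp only [Set.mem_inter_iff,
      Set.mem_ofPred_eq, and_comm])
  rw [hcard]
  exact (Nat.even_add.mp (hS v)).mpr (even_two_mul _)

theorem IsFlow.add {g h : G.E → ZMod 2 × ZMod 2} (hg : G.IsFlow g) (hh : G.IsFlow h) :
    G.IsFlow (g + h) := by
  intro v
  simp only [Pi.add_apply]
  rw [finsum_mem_add_distrib (Set.toFinite _), hg v, hh v, add_zero]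

theorem IsCycle.isFlow_indicator {S : Set G.E} (hS : G.IsCycle S) (a : ZMod 2 × ZMod 2) :
    G.IsFlow (S.indicator fun _ => a) := by
  intro v
  obtain ⟨k, hk⟩ := hS.even_ncard_nonloop_inter v
  rw [finsum_mem_indicator_const (Set.toFinite _), hk, add_nsmul, CharTwo.add_self_eq_zero]

def pureEdges (g : G.E → ZMod 2 × ZMod 2) : Set G.E := {e | g e = (0, 1) ∨ g e = (1, 0)}

theorem exists_flow_supp_eq_pureEdges_ssubset {g : G.E → ZMod 2 × ZMod 2} (hg : G.IsFlow g)
    {S : Set G.E} (hS : G.IsCircuit S) {c : ZMod 2 × ZMod 2} (hc : c = (0, 1) ∨ c = (1, 0))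
    (hSc : S ⊆ {e | g e = c}) :
    ∃ g', G.IsFlow g' ∧ G.supp g' = G.supp g ∧ pureEdges g' ⊂ pureEdges g := by
  let g' := g + S.indicator fun _ => c + (1, 1)
  have hon : ∀ e ∈ S, g' e = (1, 1) := fun e he => by
    have hge : g e = c := hSc he
    simp only [g', Pi.add_apply, Set.indicator_of_mem he, hge]
    rw [← add_assoc, CharTwo.add_self_eq_zero, zero_add]
  have hoff : ∀ e ∉ S, g' e = g e := fun e he => by
    simp only [g', Pi.add_apply, Set.indicator_of_notMem he, add_zero]
  have hc0 : c ≠ 0 := by rcases hc with rfl | rfl <;> decide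
  refine ⟨g', hg.add (hS.isCycle.isFlow_indicator _), ?_, ?_, ?_⟩
  · ext e
    by_cases he : e ∈ S
    · have hge : g e = c := hSc he
      simp [supp, hon e he, hge, hc0]
    · simp [supp, hoff e he]
  · intro e he
    by_cases heS : e ∈ S
    · simp [pureEdges, hon e heS] at he
    · simpa [pureEdges, hoff e heS] using he
  · obtain ⟨e, he⟩ := hS.1
    intro hsub
    have hge : g e = c := hSc he
    have : e ∈ pureEdges g' := hsub (by simpa [pureEdges, hge] using hc)
    simp [pureEdges, hon e he] at this

end Multigraph

open Multigraph in
/-- For every `ℤ₂×ℤ₂`-flow `f` on `G` there is a `ℤ₂×ℤ₂`-flow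
`g` on `G` with `supp g = supp f` such that neither `E_{g=(0,1)}(G)` nor
`E_{g=(1,0)}(G)` contains a circuit of `G`. -/
theorem exists_flow_acyclic_classes (G : Multigraph)
    (f : G.E → ZMod 2 × ZMod 2) (hf : G.IsFlow f) :
    ∃ g : G.E → ZMod 2 × ZMod 2, G.IsFlow g ∧ G.supp g = G.supp f ∧
      (¬ ∃ S : Set G.E, G.IsCircuit S ∧ S ⊆ {e : G.E | g e = (0, 1)}) ∧
      (¬ ∃ S : Set G.E, G.IsCircuit S ∧ S ⊆ {e : G.E | g e = (1, 0)}) := by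
  obtain ⟨g, ⟨hg, hsupp⟩, hmin⟩ :=
    Set.exists_min_image {g | G.IsFlow g ∧ G.supp g = G.supp f} (fun g => (pureEdges g).ncard)
      (Set.toFinite _) ⟨f, hf, rfl⟩
  have hacyclic : ∀ c : ZMod 2 × ZMod 2, (c = (0, 1) ∨ c = (1, 0)) →
      ¬ ∃ S : Set G.E, G.IsCircuit S ∧ S ⊆ {e | g e = c} := by
    rintro c hc ⟨S, hS, hSc⟩
    obtain ⟨g', hg', hsupp', hlt⟩ := exists_flow_supp_eq_pureEdges_ssubset hg hS hc hSc
    exact (Set.ncard_lt_ncard hlt).not_ge (hmin g' ⟨hg', hsupp'.trans hsupp⟩)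
  exact ⟨g, hg, hsupp, hacyclic _ (.inl rfl), hacyclic _ (.inr rfl)⟩
end

section
/- Let G be a graph with m edges, F a cycle of G, and f a Z2×Z2-flow on G with E(G) − E(F) ⊆ supp(f). Let C1 = E_{f=(0,1)}(G) ∪ E_{f=(1,0)}(G) and C2 = E_{f=(0,1)}(G) ∪ E_{f=(1,1)}(G). Then {C1, C2, C1 Δ F} is a cycle cover of G whose length equals 2|C1 − E(F)| + |C2| + |E(F)|, which equals m + |C1 − E(F)| + |C2 ∩ E(F)| + |(C1 ∩ C2) − E(F)|. -/
/-!
Read a set of edges through its `ZMod 2`-indicator: since a loop adds `2` to a degree, a set is a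
cycle iff at every vertex its indicator sums to zero over the non-loop edges. Hence cycles are
closed under `∆`, and composing a `ℤ₂×ℤ₂`-flow with an additive map `ℤ₂×ℤ₂ → ℤ₂` yields a cycle:
`C₁` and `C₂` come from `(a, b) ↦ a + b` and `(a, b) ↦ b`. An edge outside `C₁ ∪ C₂` carries the
value `0`, so it lies in `F` but not in `C₁`, i.e. in `C₁ ∆ F`. The lengths are then a count:
`|C₁| + |C₁ ∆ F| = 2|C₁ − F| + |F|`, and `E − F = (C₁ − F) ∪ (C₂ − F)`.
-/

open symmDiff

theorem Set.indicator_symmDiff_one_zmod_two {α : Type*} (s t : Set α) :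
    (s ∆ t).indicator (1 : α → ZMod 2) = s.indicator 1 + t.indicator 1 := by
  ext x
  by_cases hs : x ∈ s <;> by_cases ht : x ∈ t <;> simp [Set.mem_symmDiff, hs, ht]; decide

theorem Set.indicator_setOf_eq_one_zmod_two {α : Type*} (g : α → ZMod 2) :
    {x | g x = 1}.indicator 1 = g := by
  ext x
  obtain h | h := (by decide : ∀ a : ZMod 2, a = 0 ∨ a = 1) (g x) <;> simp [h]

namespace Multigraph

variable {G : Multigraph}

def links (v : G.V) : Set G.E := {e | v ∈ G.ends e ∧ ¬ (G.ends e).IsDiag}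

theorem even_degIn_iff (S : Set G.E) (v : G.V) :
    Even (G.degIn S v) ↔ ∑ᶠ e ∈ G.links v, S.indicator (1 : G.E → ZMod 2) e = 0 := by
  classical
  have : Fintype G.E := Fintype.ofFinite _
  rw [degIn, Nat.even_add, iff_true_intro (even_two_mul _), iff_true,
    ← ZMod.natCast_eq_zero_iff_even, finsum_mem_eq_toFinset_sum]
  simp only [Set.indicator_apply, Pi.one_apply, Finset.sum_boole, Nat.card_eq_fintype_card,
    Fintype.card_subtype]
  congr! 3
  ext e
  rw [Finset.mem_filter, Finset.mem_filter, Set.mem_toFinset]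
  simp only [Finset.mem_univ, true_and]
  exact and_comm

theorem isCycle_iff (S : Set G.E) :
    G.IsCycle S ↔ ∀ v, ∑ᶠ e ∈ G.links v, S.indicator (1 : G.E → ZMod 2) e = 0 :=
  forall_congr' (even_degIn_iff S)

theorem IsCycle.symmDiff {S T : Set G.E} (hS : G.IsCycle S) (hT : G.IsCycle T) :
    G.IsCycle (S ∆ T) := by
  rw [isCycle_iff] at *
  intro v
  simp only [Set.indicator_symmDiff_one_zmod_two, Pi.add_apply]
  rw [finsum_mem_add_distrib (Set.toFinite _), hS v, hT v, add_zero]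

theorem IsFlow.isCycle_setOf {f : G.E → ZMod 2 × ZMod 2} (hf : G.IsFlow f)
    (φ : ZMod 2 × ZMod 2 →+ ZMod 2) : G.IsCycle {e | φ (f e) = 1} := by
  rw [isCycle_iff, Set.indicator_setOf_eq_one_zmod_two]
  intro v
  rw [← φ.map_finsum_mem f (Set.toFinite _)]
  exact (congrArg φ (hf v)).trans φ.map_zero

end Multigraph

theorem Set.ncard_add_ncard_symmDiff {α : Type*} [Finite α] (s t : Set α) :
    s.ncard + (s ∆ t).ncard = 2 * (s \ t).ncard + t.ncard := by
  rw [Set.symmDiff_def, Set.ncard_union_eq disjoint_sdiff_sdiff,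
    ← Set.ncard_inter_add_ncard_sdiff_eq_ncard s t,
    ← Set.ncard_inter_add_ncard_sdiff_eq_ncard t s, Set.inter_comm]
  ring

theorem Set.ncard_compl_add_ncard_inter_sdiff {α : Type*} [Finite α] {s t u : Set α}
    (h : uᶜ ⊆ s ∪ t) :
    uᶜ.ncard + ((s ∩ t) \ u).ncard = (s \ u).ncard + (t \ u).ncard := by
  have hcompl : uᶜ = s \ u ∪ t \ u := by
    rw [← Set.union_sdiff_distrib, Set.sdiff_eq, Set.inter_eq_right.mpr h]
  have hinter : (s \ u) ∩ (t \ u) = (s ∩ t) \ u := by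
    ext x
    simp only [Set.mem_inter_iff, Set.mem_sdiff]
    tauto
  rw [hcompl, ← hinter, Set.ncard_union_add_ncard_inter]

open Multigraph symmDiff in
/-- Let `F` be a cycle of `G` and `f` a `ℤ₂×ℤ₂`-flow with
`E(G) − E(F) ⊆ supp f`.  With `C₁ = E_{f=(0,1)} ∪ E_{f=(1,0)}` and
`C₂ = E_{f=(0,1)} ∪ E_{f=(1,1)}`, the family `{C₁, C₂, C₁ Δ F}` is a cycle
cover of `G` whose length equals `2|C₁ − F| + |C₂| + |F|`, which equals
`m + |C₁ − F| + |C₂ ∩ F| + |(C₁ ∩ C₂) − F|`. -/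
theorem second_cover (G : Multigraph) (m : ℕ) (hm : m = Nat.card G.E)
    (F : Set G.E) (hF : G.IsCycle F)
    (f : G.E → ZMod 2 × ZMod 2) (hf : G.IsFlow f)
    (hsupp : ∀ e : G.E, e ∉ F → f e ≠ (0, 0))
    (C₁ C₂ : Set G.E)
    (hC₁ : C₁ = {e : G.E | f e = (0, 1)} ∪ {e : G.E | f e = (1, 0)})
    (hC₂ : C₂ = {e : G.E | f e = (0, 1)} ∪ {e : G.E | f e = (1, 1)}) :
    G.IsCycle C₁ ∧ G.IsCycle C₂ ∧ G.IsCycle (C₁ ∆ F) ∧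
    (∀ e : G.E, e ∈ C₁ ∪ C₂ ∪ (C₁ ∆ F)) ∧
    C₁.ncard + C₂.ncard + (C₁ ∆ F).ncard
      = 2 * (C₁ \ F).ncard + C₂.ncard + F.ncard ∧
    C₁.ncard + C₂.ncard + (C₁ ∆ F).ncard
      = m + (C₁ \ F).ncard + (C₂ ∩ F).ncard + ((C₁ ∩ C₂) \ F).ncard := by
  have hC₁_eq : C₁ = {e | (AddMonoidHom.fst _ _ + AddMonoidHom.snd _ _ :
      ZMod 2 × ZMod 2 →+ ZMod 2) (f e) = 1} := by
    rw [hC₁]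
    ext e
    exact (by decide : ∀ x : ZMod 2 × ZMod 2, x = (0, 1) ∨ x = (1, 0) ↔ x.1 + x.2 = 1) (f e)
  have hC₂_eq : C₂ = {e | AddMonoidHom.snd (ZMod 2) (ZMod 2) (f e) = 1} := by
    rw [hC₂]
    ext e
    exact (by decide : ∀ x : ZMod 2 × ZMod 2, x = (0, 1) ∨ x = (1, 1) ↔ x.2 = 1) (f e)
  have hC₁_cycle : G.IsCycle C₁ := hC₁_eq ▸ hf.isCycle_setOf _
  have hcompl : Fᶜ ⊆ C₁ ∪ C₂ := by
    intro e he
    rw [hC₁, hC₂]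
    exact (by decide : ∀ x : ZMod 2 × ZMod 2, x ≠ (0, 0) →
      (x = (0, 1) ∨ x = (1, 0)) ∨ (x = (0, 1) ∨ x = (1, 1))) (f e) (hsupp e he)
  have hcover : ∀ e, e ∈ C₁ ∪ C₂ ∪ (C₁ ∆ F) := by
    intro e
    by_cases he : e ∈ C₁ ∪ C₂
    · exact Or.inl he
    · have heF : e ∈ F := Classical.byContradiction fun h => he (hcompl h)
      exact Or.inr (Set.mem_symmDiff.mpr (Or.inr ⟨heF, fun h => he (Or.inl h)⟩))
  have hC₁F := Set.ncard_add_ncard_symmDiff C₁ F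
  refine ⟨hC₁_cycle, hC₂_eq ▸ hf.isCycle_setOf _, hC₁_cycle.symmDiff hF, hcover, by omega, ?_⟩
  have hFc := Set.ncard_compl_add_ncard_inter_sdiff hcompl
  have hE := Set.ncard_add_ncard_compl F
  have hC₂F := Set.ncard_inter_add_ncard_sdiff_eq_ncard C₂ F
  omega
end

section
/- Let f be a Z2×Z2-flow on a graph G and let F be a cycle of G such that every connected component B of F satisfies |E_{f=(0,0)}(B)| < (1/4)|E(B)|. For j ≥ 2 let d_j denote the number of connected components of F with exactly j edges. Then |E_{f=(0,0)}(F)| ≤ (1/4)|E(F)| − (1/4)·Σ_{i≥1} d_{4i+1} − (1/2)·Σ_{i≥0} d_{4i+2} − (3/4)·Σ_{i≥0} d_{4i+3} − Σ_{i≥1} d_{4i}. -/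
namespace ZeroEdgesAux

open Multigraph

variable {G : Multigraph}

lemma reaches_symm {S : Set G.E} : Symmetric (G.Reaches S) := by
  haveI : Std.Symm (fun a b : G.V => ∃ e ∈ S, G.ends e = s(a, b)) := ⟨by
    rintro a b ⟨e, he, hab⟩
    exact ⟨e, he, by rwa [Sym2.eq_swap]⟩⟩
  exact fun a b h => (Relation.ReflTransGen.symmetric).symm a b h

lemma reaches_of_mem_ends {S : Set G.E} {e : G.E} (he : e ∈ S) {u w : G.V}
    (hu : u ∈ G.ends e) (hw : w ∈ G.ends e) : G.Reaches S u w := by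
  obtain ⟨⟨a, b⟩, hab⟩ := Quot.exists_rep (G.ends e)
  have hab' : G.ends e = s(a, b) := hab.symm
  rw [hab'] at hu hw
  have hstep : G.Reaches S a b := Relation.ReflTransGen.single ⟨e, he, hab'⟩
  rcases Sym2.mem_iff.mp hu with rfl | rfl <;> rcases Sym2.mem_iff.mp hw with rfl | rfl
  · exact Relation.ReflTransGen.refl
  · exact hstep
  · exact reaches_symm hstep
  · exact Relation.ReflTransGen.refl

lemma mem_component_self {S : Set G.E} {e : G.E} (he : e ∈ S) : e ∈ G.component S e := by
  obtain ⟨⟨a, b⟩, hab⟩ := Quot.exists_rep (G.ends e)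
  have hab' : G.ends e = s(a, b) := hab.symm
  exact ⟨he, a, a, by rw [hab']; exact Sym2.mem_mk_left a b,
    by rw [hab']; exact Sym2.mem_mk_left a b, Relation.ReflTransGen.refl⟩

lemma component_eq {S : Set G.E} {e₀ e : G.E} (h₀ : e₀ ∈ S) (h : e ∈ G.component S e₀) :
    G.component S e = G.component S e₀ := by
  obtain ⟨heS, u, w, hu, hw, huw⟩ := h
  ext e'
  constructor
  · rintro ⟨he', u', w', hu', hw', h'⟩
    exact ⟨he', u, w', hu, hw', (huw.trans (reaches_of_mem_ends heS hw hu')).trans h'⟩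
  · rintro ⟨he', u'', w'', hu'', hw'', h''⟩
    exact ⟨he', w, w'', hw, hw'',
      ((reaches_symm huw).trans (reaches_of_mem_ends h₀ hu hu'')).trans h''⟩

/-- indicator: `n % 4 = r` and `4*m + r ≤ n`. -/
noncomputable def cInd (r m n : ℕ) : ℝ := if n % 4 = r ∧ 4 * m + r ≤ n then 1 else 0

noncomputable def cFour (n : ℕ) : ℝ :=
  (1 / 4) * cInd 1 1 n + (1 / 2) * cInd 2 0 n + (3 / 4) * cInd 3 0 n + cInd 0 1 n

lemma key_bound (z n : ℕ) (hn : 1 ≤ n) (h : 4 * z < n) : (z : ℝ) ≤ n / 4 - cFour n := by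
  have hm : ∃ m : ℕ, cFour n = (m : ℝ) / 4 ∧ 4 * z + m ≤ n := by
    rcases (show n % 4 = 0 ∨ n % 4 = 1 ∨ n % 4 = 2 ∨ n % 4 = 3 by omega) with h0 | h0 | h0 | h0
    · have h4 : 4 ≤ n := by omega
      exact ⟨4, by norm_num [cFour, cInd, h0, h4], by omega⟩
    · by_cases h5 : 5 ≤ n
      · exact ⟨1, by norm_num [cFour, cInd, h0, h5], by omega⟩
      · exact ⟨0, by norm_num [cFour, cInd, h0, h5], by omega⟩
    · have h2 : 2 ≤ n := by omega
      exact ⟨2, by norm_num [cFour, cInd, h0, h2], by omega⟩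
    · have h3 : 3 ≤ n := by omega
      exact ⟨3, by norm_num [cFour, cInd, h0, h3], by omega⟩
  obtain ⟨m, hc, hzm⟩ := hm
  have h' : ((4 * z + m : ℕ) : ℝ) ≤ (n : ℝ) := Nat.cast_le.mpr hzm
  push_cast at h'
  rw [hc]
  linarith

lemma sum_cInd {ι : Type*} [DecidableEq ι] (K : Finset ι) (g : ι → ℕ) (r m : ℕ) :
    ∑ B ∈ K, cInd r m (g B) =
      ((K.filter (fun B => g B % 4 = r ∧ 4 * m + r ≤ g B)).card : ℝ) := by
  simp [cInd, Finset.sum_boole]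

lemma finsum_d_eq {ι : Type*} [DecidableEq ι] (K : Finset ι) (g : ι → ℕ) (d : ℕ → ℕ)
    (hd : ∀ j, d j = (K.filter (fun B => g B = j)).card) (N : ℕ) (hN : ∀ B ∈ K, g B ≤ N)
    (r m : ℕ) (hr : r < 4) :
    ∑ᶠ i ∈ Set.Ici m, (d (4 * i + r) : ℝ) =
      ((K.filter (fun B => g B % 4 = r ∧ 4 * m + r ≤ g B)).card : ℝ) := by
  have h1 : ∑ᶠ i ∈ Set.Ici m, (d (4 * i + r) : ℝ)
      = ∑ i ∈ Finset.Icc m N, (d (4 * i + r) : ℝ) := by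
    apply finsum_mem_eq_sum_of_inter_support_eq
    ext i
    simp only [Set.mem_inter_iff, Set.mem_Ici, Function.mem_support, ne_eq, Finset.coe_Icc,
      Set.mem_Icc]
    constructor
    · rintro ⟨him, hne⟩
      refine ⟨⟨him, ?_⟩, hne⟩
      by_contra hiN
      push_neg at hiN
      apply hne
      rw [hd]
      norm_cast
      rw [Finset.card_eq_zero, Finset.filter_eq_empty_iff]
      intro B hB
      have := hN B hB
      omega
    · rintro ⟨⟨him, _⟩, hne⟩
      exact ⟨him, hne⟩
  rw [h1]
  norm_cast
  simp only [hd]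
  have hU : (Finset.Icc m N).biUnion (fun i => K.filter (fun B => g B = 4 * i + r)) =
      K.filter (fun B => g B % 4 = r ∧ 4 * m + r ≤ g B) := by
    ext B
    simp only [Finset.mem_biUnion, Finset.mem_Icc, Finset.mem_filter]
    constructor
    · rintro ⟨i, ⟨hmi, hiN⟩, hBK, hgB⟩
      exact ⟨hBK, by omega, by omega⟩
    · rintro ⟨hBK, hmod, hle⟩
      have := hN B hBK
      exact ⟨g B / 4, ⟨by omega, by omega⟩, hBK, by omega⟩
  rw [← hU, Finset.card_biUnion]
  intro i _ j _ hij
  rw [Function.onFun, Finset.disjoint_left]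
  intro B hB hB'
  simp only [Finset.mem_filter] at hB hB'
  exact hij (by omega)

end ZeroEdgesAux

open Multigraph in
/-- If `f` is a `ℤ₂×ℤ₂`-flow on `G` and `F` is a cycle of
`G` each of whose connected components `B` satisfies
`|E_{f=(0,0)}(B)| < |E(B)|/4`, then, with `d j` the number of connected
components of `F` with exactly `j` edges,
`|E_{f=(0,0)}(F)| ≤ |E(F)|/4 − (1/4)Σ_{i≥1} d_{4i+1} − (1/2)Σ_{i≥0} d_{4i+2}
 − (3/4)Σ_{i≥0} d_{4i+3} − Σ_{i≥1} d_{4i}`. -/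
theorem zero_edges_bound (G : Multigraph)
    (f : G.E → ZMod 2 × ZMod 2) (hf : G.IsFlow f)
    (F : Set G.E) (hF : G.IsCycle F)
    (hcomp : ∀ B : Set G.E, G.IsComponent F B →
      ({e ∈ B | f e = (0, 0)}.ncard : ℝ) < (1 / 4) * (B.ncard : ℝ))
    (d : ℕ → ℕ)
    (hd : ∀ j : ℕ, d j = {B : Set G.E | G.IsComponent F B ∧ B.ncard = j}.ncard) :
    ({e ∈ F | f e = (0, 0)}.ncard : ℝ) ≤
      (1 / 4) * (F.ncard : ℝ)
        - (1 / 4) * (∑ᶠ i ∈ Set.Ici 1, (d (4 * i + 1) : ℝ))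
        - (1 / 2) * (∑ᶠ i ∈ Set.Ici 0, (d (4 * i + 2) : ℝ))
        - (3 / 4) * (∑ᶠ i ∈ Set.Ici 0, (d (4 * i + 3) : ℝ))
        - (∑ᶠ i ∈ Set.Ici 1, (d (4 * i) : ℝ)) := by
  classical
  haveI : Fintype G.E := Fintype.ofFinite _
  have hKfin : {B : Set G.E | G.IsComponent F B}.Finite := Set.toFinite _
  set K : Finset (Set G.E) := hKfin.toFinset with hKdef
  have hmemK : ∀ B : Set G.E, B ∈ K ↔ G.IsComponent F B := fun B => hKfin.mem_toFinset
  have hBF : ∀ B ∈ K, B ⊆ F := by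
    intro B hB
    obtain ⟨e₀, he₀, rfl⟩ := (hmemK B).mp hB
    exact Set.sep_subset _ _
  have hUnique : ∀ e ∈ F, ∀ B ∈ K, e ∈ B → B = G.component F e := by
    intro e heF B hB heB
    obtain ⟨e₀, he₀, rfl⟩ := (hmemK B).mp hB
    exact (ZeroEdgesAux.component_eq he₀ heB).symm
  have hpart : ∀ P : G.E → Prop,
      {e ∈ F | P e}.ncard = ∑ B ∈ K, {e ∈ B | P e}.ncard := by
    intro P
    have hset : {e ∈ F | P e}.toFinset = K.biUnion (fun B => {e ∈ B | P e}.toFinset) := by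
      ext e
      simp only [Set.mem_toFinset, Set.mem_sep_iff, Finset.mem_biUnion]
      constructor
      · rintro ⟨heF, hPe⟩
        exact ⟨G.component F e, (hmemK _).mpr ⟨e, heF, rfl⟩,
          ZeroEdgesAux.mem_component_self heF, hPe⟩
      · rintro ⟨B, hBK, heB, hPe⟩
        exact ⟨hBF B hBK heB, hPe⟩
    have hdisj : ∀ B ∈ K, ∀ B' ∈ K, B ≠ B' →
        Disjoint {e ∈ B | P e}.toFinset {e ∈ B' | P e}.toFinset := by
      intro B hB B' hB' hne
      rw [Finset.disjoint_left]
      intro e he he'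
      simp only [Set.mem_toFinset, Set.mem_sep_iff] at he he'
      exact hne ((hUnique e (hBF B hB he.1) B hB he.1).trans
        (hUnique e (hBF B' hB' he'.1) B' hB' he'.1).symm)
    rw [Set.ncard_eq_toFinset_card', hset, Finset.card_biUnion hdisj]
    exact Finset.sum_congr rfl fun B _ => (Set.ncard_eq_toFinset_card' _).symm
  have hzF : {e ∈ F | f e = (0, 0)}.ncard = ∑ B ∈ K, {e ∈ B | f e = (0, 0)}.ncard :=
    hpart _
  have hFcard : F.ncard = ∑ B ∈ K, B.ncard := by
    have := hpart (fun _ => True)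
    simpa using this
  have hdK : ∀ j, d j = (K.filter (fun B => B.ncard = j)).card := by
    intro j
    rw [hd]
    have : {B : Set G.E | G.IsComponent F B ∧ B.ncard = j}
        = ↑(K.filter (fun B => B.ncard = j)) := by
      ext B
      simp [hmemK]
    rw [this, Set.ncard_coe_finset]
  have hN : ∀ B ∈ K, B.ncard ≤ Nat.card G.E := by
    intro B _
    calc B.ncard ≤ (Set.univ : Set G.E).ncard :=
          Set.ncard_le_ncard (Set.subset_univ B) Set.finite_univ
      _ = Nat.card G.E := Set.ncard_univ _
  have e1 := ZeroEdgesAux.finsum_d_eq K Set.ncard d hdK (Nat.card G.E) hN 1 1 (by norm_num)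
  have e2 := ZeroEdgesAux.finsum_d_eq K Set.ncard d hdK (Nat.card G.E) hN 2 0 (by norm_num)
  have e3 := ZeroEdgesAux.finsum_d_eq K Set.ncard d hdK (Nat.card G.E) hN 3 0 (by norm_num)
  have e0 := ZeroEdgesAux.finsum_d_eq K Set.ncard d hdK (Nat.card G.E) hN 0 1 (by norm_num)
  simp only [Nat.add_zero] at e0
  rw [e1, e2, e3, e0]
  have hsum : ∑ B ∈ K, ZeroEdgesAux.cFour B.ncard
      = (1 / 4) * ((K.filter (fun B => B.ncard % 4 = 1 ∧ 4 * 1 + 1 ≤ B.ncard)).card : ℝ)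
        + (1 / 2) * ((K.filter (fun B => B.ncard % 4 = 2 ∧ 4 * 0 + 2 ≤ B.ncard)).card : ℝ)
        + (3 / 4) * ((K.filter (fun B => B.ncard % 4 = 3 ∧ 4 * 0 + 3 ≤ B.ncard)).card : ℝ)
        + ((K.filter (fun B => B.ncard % 4 = 0 ∧ 4 * 1 + 0 ≤ B.ncard)).card : ℝ) := by
    simp only [ZeroEdgesAux.cFour, Finset.sum_add_distrib, ← Finset.mul_sum,
      ZeroEdgesAux.sum_cInd K Set.ncard]
  have hmain : ({e ∈ F | f e = (0, 0)}.ncard : ℝ)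
      ≤ (F.ncard : ℝ) / 4 - ∑ B ∈ K, ZeroEdgesAux.cFour B.ncard := by
    have step1 : ({e ∈ F | f e = (0, 0)}.ncard : ℝ)
        = ∑ B ∈ K, ({e ∈ B | f e = (0, 0)}.ncard : ℝ) := by
      rw [hzF]; push_cast; rfl
    have step2 : ∑ B ∈ K, ({e ∈ B | f e = (0, 0)}.ncard : ℝ)
        ≤ ∑ B ∈ K, ((B.ncard : ℝ) / 4 - ZeroEdgesAux.cFour B.ncard) := by
      apply Finset.sum_le_sum
      intro B hB
      have hcB := hcomp B ((hmemK B).mp hB)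
      have hne : 1 ≤ B.ncard := by
        obtain ⟨e₀, he₀, rfl⟩ := (hmemK B).mp hB
        have : e₀ ∈ G.component F e₀ := ZeroEdgesAux.mem_component_self he₀
        have hpos : 0 < (G.component F e₀).ncard :=
          (Set.ncard_pos (Set.toFinite _)).mpr ⟨e₀, this⟩
        omega
      apply ZeroEdgesAux.key_bound _ _ hne
      have : ((4 * {e ∈ B | f e = (0, 0)}.ncard : ℕ) : ℝ) < (B.ncard : ℝ) := by
        push_cast
        linarith
      exact_mod_cast this
    have step3 : ∑ B ∈ K, ((B.ncard : ℝ) / 4 - ZeroEdgesAux.cFour B.ncard)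
        = (F.ncard : ℝ) / 4 - ∑ B ∈ K, ZeroEdgesAux.cFour B.ncard := by
      rw [Finset.sum_sub_distrib, ← Finset.sum_div, hFcard]
      push_cast
      ring
    linarith [step1, step2, step3]
  rw [hsum] at hmain
  linarith
end

section
/- Let G be a graph with m edges (m ≥ 2), and let C be a circuit of G with |E(C)| ≥ 14m/log2(m) that has exactly k threads e_1, …, e_k of G, listed with nondecreasing lengths, where k ≤ (2/7)·log2(m). Then there exists an index i with 1 ≤ i ≤ k such that the length of e_i is at least 5^i · log2(m). -/
/-! If every thread were short, `ℓ i < 5 ^ (i + 1) · L` with `L = log₂ m`, then summing the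
geometric series gives `|C| < 5 ^ (k + 1) / 4 · L`, so `14 m < 5 ^ (k + 1) / 4 · L²`.
But `k ≤ (2/7) L`, `L ≤ (9/e) · e ^ (L/9)` and `2/9 + (2/7) ln 5 ≤ ln 2` bound the right-hand
side by `14 · 2 ^ L = 14 m`. -/

section

open Real

lemma ncard_iUnion_range_le_sum {α ι : Type*} [Fintype ι] (ℓ : ι → ℕ)
    (f : ∀ i, Fin (ℓ i) → α) : (⋃ i, Set.range (f i)).ncard ≤ ∑ i, ℓ i := by
  refine (Set.ncard_iUnion_le_of_fintype _).trans (Finset.sum_le_sum fun i _ => ?_)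
  simpa [Nat.card_coe_set_eq] using Finite.card_range_le (f i)

lemma sum_pow_succ_lt {r : ℝ} (hr : 1 < r) (k : ℕ) :
    ∑ i : Fin k, r ^ (i.val + 1) < r ^ (k + 1) / (r - 1) := by
  have hr1 : 0 < r - 1 := sub_pos.mpr hr
  rw [Fin.sum_univ_eq_sum_range (fun i => r ^ (i + 1))]
  simp_rw [pow_succ, ← Finset.sum_mul, geom_sum_eq hr.ne', div_mul_eq_mul_div]
  exact div_lt_div_of_pos_right (by nlinarith) hr1

lemma le_div_exp_one_mul_exp_div {a : ℝ} (ha : 0 < a) (x : ℝ) :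
    x ≤ a / exp 1 * exp (x / a) := by
  have h : x / a ≤ exp (x / a) / exp 1 := by
    rw [← exp_sub]; linarith [add_one_le_exp (x / a - 1)]
  calc x ≤ exp (x / a) / exp 1 * a := (div_le_iff₀ ha).mp h
    _ = a / exp 1 * exp (x / a) := by ring

lemma two_div_nine_add_two_div_seven_mul_log_five_le_log_two :
    2 / 9 + 2 / 7 * log 5 ≤ log 2 := by
  have h54 : log (5 / 4) ≤ 5 / 4 - 1 := log_le_sub_one_of_pos (by norm_num)
  rw [log_div (by norm_num) (by norm_num), show (4 : ℝ) = 2 ^ 2 by norm_num, log_pow] at h54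
  linarith [log_two_gt_d9]

lemma five_pow_mul_sq_le_two_rpow {L : ℝ} (hL : 0 ≤ L) {k : ℕ} (hk : (k : ℝ) ≤ 2 / 7 * L) :
    5 ^ (k + 1) / 4 * L ^ 2 ≤ 14 * (2 : ℝ) ^ L := by
  have h5k : (5 : ℝ) ^ k ≤ exp (2 / 7 * L * log 5) := by
    rw [← rpow_natCast, rpow_def_of_pos (by norm_num), mul_comm]
    exact exp_le_exp.mpr (mul_le_mul_of_nonneg_right hk (log_nonneg (by norm_num)))
  have hL2 : L ^ 2 ≤ (9 / exp 1) ^ 2 * exp (2 * L / 9) := by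
    have := pow_le_pow_left₀ hL (le_div_exp_one_mul_exp_div (by norm_num : (0 : ℝ) < 9) L) 2
    rwa [mul_pow, ← exp_nat_mul, ← mul_div_assoc, Nat.cast_ofNat] at this
  have hconst : 5 / 4 * (9 / exp 1) ^ 2 ≤ 14 := by
    rw [div_pow, mul_div_assoc', div_le_iff₀ (by positivity)]
    nlinarith [exp_one_gt_d9]
  have hexp : exp (2 / 7 * L * log 5) * exp (2 * L / 9) ≤ exp (log 2 * L) := by
    rw [← exp_add, exp_le_exp]
    nlinarith [two_div_nine_add_two_div_seven_mul_log_five_le_log_two]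
  rw [rpow_def_of_pos (by norm_num)]
  calc 5 ^ (k + 1) / 4 * L ^ 2 = 5 / 4 * 5 ^ k * L ^ 2 := by ring
    _ ≤ 5 / 4 * exp (2 / 7 * L * log 5) * ((9 / exp 1) ^ 2 * exp (2 * L / 9)) := by
        gcongr
    _ = 5 / 4 * (9 / exp 1) ^ 2 * (exp (2 / 7 * L * log 5) * exp (2 * L / 9)) := by ring
    _ ≤ 14 * exp (log 2 * L) := by gcongr

end

open Multigraph in
theorem exists_long_thread_general (G : Multigraph) (m : ℕ)
    (hm2 : 2 ≤ m) (C : Set G.E)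
    (hClarge : 14 * (m : ℝ) / Real.logb 2 (m : ℝ) ≤ (C.ncard : ℝ))
    (k : ℕ) (ℓ : Fin k → ℕ) (W : ∀ i : Fin k, G.Walk (ℓ i))
    (hcover : (⋃ i : Fin k, Set.range (W i).edge) = C)
    (hk : (k : ℝ) ≤ 2 / 7 * Real.logb 2 (m : ℝ)) :
    ∃ i : Fin k, (5 : ℝ) ^ (i.val + 1) * Real.logb 2 (m : ℝ) ≤ (ℓ i : ℝ) := by
  by_contra! hshort
  set L := Real.logb 2 (m : ℝ)
  have hm : (0 : ℝ) < m := by positivity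
  have hL : 1 ≤ L := by
    rw [Real.le_logb_iff_rpow_le (by norm_num) hm, Real.rpow_one]
    exact_mod_cast hm2
  have hC : (C.ncard : ℝ) < 5 ^ (k + 1) / 4 * L := calc
    (C.ncard : ℝ) ≤ ∑ i, (ℓ i : ℝ) := by
      rw [← hcover]
      exact_mod_cast ncard_iUnion_range_le_sum ℓ fun i => (W i).edge
    _ ≤ ∑ i : Fin k, 5 ^ (i.val + 1) * L := Finset.sum_le_sum fun i _ => (hshort i).le
    _ = (∑ i : Fin k, (5 : ℝ) ^ (i.val + 1)) * L := (Finset.sum_mul _ _ _).symm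
    _ < 5 ^ (k + 1) / 4 * L := by
      gcongr
      exact (sum_pow_succ_lt (by norm_num : (1 : ℝ) < 5) k).trans_eq (by norm_num)
  have hCL : 14 * (m : ℝ) ≤ C.ncard * L := (div_le_iff₀ (by linarith)).mp hClarge
  have hbound := five_pow_mul_sq_le_two_rpow (by linarith) hk
  rw [Real.rpow_logb (by norm_num) (by norm_num) hm] at hbound
  nlinarith

open Multigraph in
/-- Let `G` have `m ≥ 2` edges and let `C` be a circuit of
`G` with `|E(C)| ≥ 14m/log₂ m` that is partitioned into exactly `k` threads of
`G`, listed with nondecreasing lengths `ℓ 0 ≤ ℓ 1 ≤ …`, where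
`k ≤ (2/7)·log₂ m`.  Then some thread (the `(i+1)`-st, `0 ≤ i < k`) has length
at least `5^(i+1)·log₂ m`. -/
theorem exists_long_thread (G : Multigraph) (m : ℕ) (hm : m = Nat.card G.E)
    (hm2 : 2 ≤ m) (C : Set G.E) (hC : G.IsCircuit C)
    (hClarge : 14 * (m : ℝ) / Real.logb 2 (m : ℝ) ≤ (C.ncard : ℝ))
    (k : ℕ) (ℓ : Fin k → ℕ) (W : ∀ i : Fin k, G.Walk (ℓ i))
    (hthread : ∀ i : Fin k, G.IsThread (W i))
    (hmono : ∀ i j : Fin k, i ≤ j → ℓ i ≤ ℓ j)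
    (hcover : (⋃ i : Fin k, Set.range (W i).edge) = C)
    (hdisj : ∀ i j : Fin k, i ≠ j →
      Disjoint (Set.range (W i).edge) (Set.range (W j).edge))
    (hk : (k : ℝ) ≤ 2 / 7 * Real.logb 2 (m : ℝ)) :
    ∃ i : Fin k, (5 : ℝ) ^ (i.val + 1) * Real.logb 2 (m : ℝ) ≤ (ℓ i : ℝ) :=
  exists_long_thread_general G m hm2 C hClarge k ℓ W hcover hk
end
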